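/- arXiv:cs/0205038 — 2 statements merged into one kernel-verified Lean document; each statement's English description precedes it below -/
import Mathlib

section
/- Fix a request sequence σ and a time t lying in some phase at which the requested vertex σ(t) is stale. Let c be the number of distinct clean vertices requested in the current phase strictly before time t, and let s be the number of stale vertices just before time t (including σ(t)). Then the probability, over the marking algorithm's random choices, that σ(t) is not covered by the marking algorithm's configuration just before serving σ(t) equals c/s. -/
/-!
Paging model: vertices are `Fin n`, configurations are `k`-element subsets of `Fin n`.
`run` gives the distribution over configuration sequences of a randomized online
algorithm (given by its transition kernel), starting from `{0,…,k−1}`;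
`markingKernel` is the marking algorithm.

Phases, clean and stale vertices are tracked by the fold `phaseState`:
at any moment, `prev` is the set of vertices requested in the previous phase
(`{0,…,k−1}` for the first phase) and `cur` is the set of vertices requested so
far in the current phase (before the first phase, `prev = cur = {0,…,k−1}`).
A vertex is clean if it lies in neither `prev` nor `cur`, and stale if it lies
in `prev` but not in `cur`.  A request at (0-indexed) time `i` is a stale request
within a phase iff `σ(i) ∈ prev \ cur` and `cur.card < k` (if `cur.card = k` and
`σ(i) ∉ cur`, the request starts a new phase, for which it is clean).

STATEMENT: Fix a request sequence `σ` and a time `t` lying in some phase at which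
the requested vertex `σ(t)` is stale.  Let `c` be the number of distinct clean
vertices requested in the current phase strictly before time `t` (that is,
`|cur \ prev|`) and let `s` be the number of stale vertices just before time `t`,
including `σ(t)` (that is, `|prev \ cur|`).  Then the probability, over the
marking algorithm's random choices, that `σ(t)` is not covered by the marking
algorithm's configuration just before serving `σ(t)` equals `c/s`.
-/

open scoped ENNReal

/-- The initial configuration `{0, …, k−1}` as a subset of `Fin n`. -/
def initConf (k n : ℕ) : Finset (Fin n) :=
  Finset.univ.filter (fun v => (v : ℕ) < k)

/-- The cost of a sequence of configurations, starting from configuration `C`: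
the sum over consecutive steps of the number of newly covered vertices. -/
def listCost {n : ℕ} : Finset (Fin n) → List (Finset (Fin n)) → ℕ
  | _, [] => 0
  | C, D :: L => (D \ C).card + listCost D L

/-- `Cs` is a service of the request sequence `σ` by `k`-element configurations:
the `t`-th configuration covers the `t`-th request. -/
def Serves {n : ℕ} (k : ℕ) (σ : List (Fin n)) (Cs : List (Finset (Fin n))) : Prop :=
  List.Forall₂ (· ∈ ·) σ Cs ∧ ∀ C ∈ Cs, C.card = k

/-- The optimal offline cost of serving `σ`, starting from `{0,…,k−1}`. -/
noncomputable def OPT (k n : ℕ) (σ : List (Fin n)) : ℕ :=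
  sInf {m | ∃ Cs, Serves k σ Cs ∧ listCost (initConf k n) Cs = m}

/-- A (transition kernel of a) randomized online algorithm: given the request history,
the current configuration and a new request, produce a distribution over configurations. -/
abbrev Kernel (n : ℕ) := List (Fin n) → Finset (Fin n) → Fin n → PMF (Finset (Fin n))

/-- The distribution over configuration sequences induced by running kernel `K`
on request sequence `σ`, with history `hist` and current configuration `C`. -/
noncomputable def runFrom {n : ℕ} (K : Kernel n) :
    List (Fin n) → List (Fin n) → Finset (Fin n) → PMF (List (Finset (Fin n)))
  | [], _, _ => PMF.pure []
  | r :: rest, hist, C =>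
      (K hist C r).bind fun C' =>
        (runFrom K rest (hist ++ [r]) C').map fun L => C' :: L

/-- The distribution over configuration sequences induced by running kernel `K`
on request sequence `σ`, starting from the configuration `{0,…,k−1}`. -/
noncomputable def run {n : ℕ} (k : ℕ) (K : Kernel n) (σ : List (Fin n)) :
    PMF (List (Finset (Fin n))) :=
  runFrom K σ [] (initConf k n)

/-- The expected cost of the randomized online algorithm with kernel `K` on `σ`. -/
noncomputable def expCost {n : ℕ} (k : ℕ) (K : Kernel n) (σ : List (Fin n)) : ℝ :=
  ∑' Cs : List (Finset (Fin n)),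
    ((run k K σ) Cs).toReal * (listCost (initConf k n) Cs : ℝ)

/-- One step of the marking process: mark `r`; if `k+1` vertices are marked,
erase all marks except the one on `r`. -/
def markUpdate {n : ℕ} (k : ℕ) (M : Finset (Fin n)) (r : Fin n) : Finset (Fin n) :=
  if (insert r M).card = k + 1 then {r} else insert r M

/-- The set of marked vertices after processing the request sequence `σ`
(initially the vertices `{0,…,k−1}` are marked). -/
def marksAfter {n : ℕ} (k : ℕ) (σ : List (Fin n)) : Finset (Fin n) :=
  σ.foldl (markUpdate k) (initConf k n)

/-- The marking algorithm of type `(k,n)`: on a request `r`, first update the marks;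
if `r` is covered do nothing, and otherwise evict a uniformly random unmarked
covered vertex and move its server to `r`. -/
noncomputable def markingKernel (k n : ℕ) : Kernel n := fun hist C r =>
  let M := marksAfter k (hist ++ [r])
  if r ∈ C then PMF.pure C
  else if h : (C \ M).Nonempty then
    (PMF.uniformOfFinset (C \ M) h).map fun u => insert r (C.erase u)
  else PMF.pure (insert r (C.erase (if h2 : C.Nonempty then C.min' h2 else r)))

/-- The configuration after the first `t` requests, read off from the list `Cs`
of successive configurations (the configuration at time `0` is `{0,…,k−1}`). -/
def confAt {n : ℕ} (k : ℕ) (Cs : List (Finset (Fin n))) (t : ℕ) : Finset (Fin n) :=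
  (initConf k n :: Cs).getD t (initConf k n)

/-- The phase bookkeeping state: the set of vertices requested in the previous
phase, and the set of vertices requested so far in the current phase. -/
structure PhaseSt (n : ℕ) where
  prev : Finset (Fin n)
  cur : Finset (Fin n)

/-- Updating the phase state on a request `r`: if `r` was already requested in the
current phase nothing changes; if the current phase already contains `k` distinct
vertices, a new phase begins with `r`; otherwise `r` joins the current phase. -/
def phaseStep {n : ℕ} (k : ℕ) (s : PhaseSt n) (r : Fin n) : PhaseSt n :=
  if r ∈ s.cur then s
  else if s.cur.card = k then ⟨s.cur, {r}⟩
  else ⟨s.prev, insert r s.cur⟩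

/-- The phase state after processing the request sequence `σ`; initially
`prev = cur = {0,…,k−1}`. -/
def phaseState {n : ℕ} (k : ℕ) (σ : List (Fin n)) : PhaseSt n :=
  σ.foldl (phaseStep k) ⟨initConf k n, initConf k n⟩

/-!
Just before each request, the configuration of the marking algorithm is distributed as
`cur ∪ S`, where `cur` is the set of vertices requested so far in the current phase (all of them
covered and marked) and `S` is a uniformly random `(k - |cur|)`-subset of the stale vertices.
This invariant survives every request. A request in `cur` changes nothing; a request opening a
new phase evicts a uniformly random vertex of `cur`; any other request removes one element from
the pool `S` of servers on unmarked stale vertices (the requested vertex if it lies in `S`,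
otherwise a uniformly random one), and this turns a uniform `j`-subset of the stale vertices into
a uniform `(j - 1)`-subset of the remaining ones. Hence a stale vertex is missed with probability
`C(s - 1, j) / C(s, j) = (s - j) / s`, and `s - j = c` because the previous phase requested
exactly `k` vertices.
-/

open Finset

namespace Finset

variable {α : Type*} [DecidableEq α]

lemma filter_erase_eq_sdiff {S T : Finset α} (hTS : T ⊆ S) (hcard : S.card = T.card + 1) :
    S.filter (fun u => S.erase u = T) = S \ T := by
  ext u
  simp only [mem_filter, mem_sdiff]
  refine ⟨fun ⟨hu, hT⟩ => ⟨hu, hT ▸ notMem_erase u S⟩, fun ⟨hu, huT⟩ => ⟨hu, ?_⟩⟩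
  refine (eq_of_subset_of_card_le (subset_erase.2 ⟨hTS, huT⟩) ?_).symm
  rw [card_erase_of_mem hu]
  omega

lemma card_filter_superset_powersetCard {Y T : Finset α} (hTY : T ⊆ Y) :
    ((Y.powersetCard (T.card + 1)).filter (T ⊆ ·)).card = Y.card - T.card := by
  have himage : (Y.powersetCard (T.card + 1)).filter (T ⊆ ·) = (Y \ T).image (insert · T) := by
    ext S
    simp only [mem_filter, mem_powersetCard, mem_image, mem_sdiff]
    constructor
    · rintro ⟨⟨hSY, hS⟩, hTS⟩
      obtain ⟨u, huT, rfl⟩ := exists_eq_insert_iff.2 ⟨hTS, hS.symm⟩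
      exact ⟨u, ⟨hSY (mem_insert_self u T), huT⟩, rfl⟩
    · rintro ⟨u, ⟨huY, huT⟩, rfl⟩
      exact ⟨⟨insert_subset huY hTY, card_insert_of_notMem huT⟩, subset_insert u T⟩
  rw [himage, card_image_of_injOn, card_sdiff_of_subset hTY]
  exact fun u hu v _ huv => (insert_inj (mem_sdiff.1 hu).2).1 huv

lemma powersetCard_erase (X : Finset α) (r : α) (j : ℕ) :
    (X.erase r).powersetCard j = (X.powersetCard j).filter (r ∉ ·) := by
  ext S
  simp only [mem_filter, mem_powersetCard, subset_erase]
  tauto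

end Finset

namespace PMF

variable {α β : Type*}

lemma bind_congr_of_mem_support {p : PMF α} {f g : α → PMF β}
    (h : ∀ a ∈ p.support, f a = g a) : p.bind f = p.bind g := by
  ext b
  refine tsum_congr fun a => ?_
  by_cases ha : a ∈ p.support
  · rw [h a ha]
  · rw [(p.apply_eq_zero_iff a).2 ha, zero_mul, zero_mul]

lemma map_congr_of_mem_support {p : PMF α} {f g : α → β}
    (h : ∀ a ∈ p.support, f a = g a) : p.map f = p.map g :=
  bind_congr_of_mem_support fun a ha => by rw [Function.comp_apply, h a ha]; rfl

lemma eq_uniformOfFinset_of_support_subset {p : PMF α} {s : Finset α} (hs : s.Nonempty)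
    (hsupp : p.support ⊆ s) (hconst : ∀ a ∈ s, ∀ b ∈ s, p a = p b) :
    p = uniformOfFinset s hs := by
  have hzero : ∀ a ∉ s, p a = 0 := fun a ha => (p.apply_eq_zero_iff a).2 fun h => ha (hsupp h)
  ext a
  rw [uniformOfFinset_apply]
  obtain ⟨a₀, ha₀⟩ := hs
  have hsum : (s.card : ℝ≥0∞) * p a₀ = 1 := by
    rw [← p.tsum_coe, tsum_eq_sum hzero, ← nsmul_eq_mul, ← sum_const]
    exact sum_congr rfl fun a ha => hconst a₀ ha₀ a ha
  split_ifs with ha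
  · exact (hconst a ha a₀ ha₀).trans
      (ENNReal.eq_inv_of_mul_eq_one_left ((mul_comm _ _).trans hsum))
  · exact hzero a ha

lemma uniformOfFinset_eq_pure {s : Finset α} {a : α} (hsa : s = {a}) (hs : s.Nonempty) :
    uniformOfFinset s hs = pure a := by
  subst hsa
  exact (eq_uniformOfFinset_of_support_subset hs (by simp) (by simp)).symm

lemma map_erase_uniformOfFinset_apply [DecidableEq α] {S T : Finset α} (hS : S.Nonempty)
    (hcard : S.card = T.card + 1) :
    (uniformOfFinset S hS).map S.erase T = if T ⊆ S then (S.card : ℝ≥0∞)⁻¹ else 0 := by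
  rw [← toOuterMeasure_apply_singleton, toOuterMeasure_map_apply,
    toOuterMeasure_uniformOfFinset_apply]
  split_ifs with hTS
  · have := filter_erase_eq_sdiff hTS hcard
    simp only [Set.mem_preimage, Set.mem_singleton_iff] at this ⊢
    rw [this, card_sdiff_of_subset hTS, hcard, Nat.add_sub_cancel_left, Nat.cast_one, one_div]
  · convert ENNReal.zero_div
    simp only [Set.mem_preimage, Set.mem_singleton_iff, Nat.cast_eq_zero, card_eq_zero,
      filter_eq_empty_iff]
    exact fun u _ hu => hTS (hu ▸ erase_subset u S)

lemma toReal_uniformOfFinset_powersetCard_notMem [DecidableEq α] {X : Finset α}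
    {r : α} {j : ℕ} (hr : r ∈ X) (h : (X.powersetCard j).Nonempty) :
    ((uniformOfFinset (X.powersetCard j) h).toOuterMeasure {S | r ∉ S}).toReal =
      ((X.card - j : ℕ) : ℝ) / X.card := by
  have hX : 0 < X.card := card_pos.2 ⟨r, hr⟩
  have hj : j ≤ X.card := powersetCard_nonempty.1 h
  rw [toOuterMeasure_uniformOfFinset_apply]
  simp only [Set.mem_ofPred_eq]
  rw [← powersetCard_erase, card_powersetCard, card_powersetCard, card_erase_of_mem hr,
    ENNReal.toReal_div, ENNReal.toReal_natCast, ENNReal.toReal_natCast,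
    div_eq_div_iff (Nat.cast_ne_zero.2 (Nat.choose_pos hj).ne') (Nat.cast_ne_zero.2 hX.ne')]
  have hchoose := Nat.choose_mul_succ_eq (X.card - 1) j
  rw [Nat.sub_add_cancel hX] at hchoose
  exact_mod_cast hchoose.trans (mul_comm _ _)

end PMF

section RandomErase

variable {α : Type*} [DecidableEq α]

/-- The last branch, for empty `S`, is a junk value that is never used. -/
noncomputable def eraseOrRandomErase (r : α) (S : Finset α) : PMF (Finset α) :=
  if r ∈ S then PMF.pure (S.erase r)
  else if h : S.Nonempty then (PMF.uniformOfFinset S h).map S.erase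
  else PMF.pure S

lemma eraseOrRandomErase_apply {r : α} {S T : Finset α} (hcard : S.card = T.card + 1)
    (hrT : r ∉ T) :
    eraseOrRandomErase r S T =
      if r ∈ S then (if S = insert r T then 1 else 0)
      else (if T ⊆ S then (S.card : ℝ≥0∞)⁻¹ else 0) := by
  unfold eraseOrRandomErase
  by_cases hrS : r ∈ S
  · have hiff : T = S.erase r ↔ S = insert r T :=
      ⟨fun h => h ▸ (insert_erase hrS).symm, fun h => by rw [h, erase_insert hrT]⟩
    simp only [if_pos hrS, PMF.pure_apply, hiff]
  · have hS : S.Nonempty := card_pos.1 (by omega)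
    rw [if_neg hrS, if_neg hrS, dif_pos hS, PMF.map_erase_uniformOfFinset_apply hS hcard]

lemma sum_eraseOrRandomErase_apply {X T : Finset α} {r : α} {j : ℕ} (hj : 1 ≤ j)
    (hT : T ∈ (X.erase r).powersetCard (j - 1)) :
    ∑ S ∈ X.powersetCard j, eraseOrRandomErase r S T =
      (if r ∈ X then 1 else 0) + ((X.erase r).card - (j - 1) : ℕ) * (j : ℝ≥0∞)⁻¹ := by
  obtain ⟨hTX, hTcard⟩ := mem_powersetCard.1 hT
  obtain ⟨hTX', hrT⟩ := subset_erase.1 hTX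
  have hcard : ∀ S ∈ X.powersetCard j, S.card = T.card + 1 := fun S hS => by
    rw [(mem_powersetCard.1 hS).2]; omega
  rw [sum_congr rfl fun S hS => eraseOrRandomErase_apply (hcard S hS) hrT, sum_ite,
    sum_ite_eq', ← powersetCard_erase]
  congr 1
  · refine if_congr ?_ rfl rfl
    simp only [mem_filter, mem_powersetCard, mem_insert_self, and_true,
      card_insert_of_notMem hrT, insert_subset_iff, hTX', and_true]
    exact and_iff_left (by omega)
  · have hsupersets := card_filter_superset_powersetCard hTX
    rw [show T.card + 1 = j by omega, hTcard] at hsupersets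
    rw [sum_congr rfl fun S hS => by rw [(mem_powersetCard.1 hS).2], ← sum_filter, sum_const,
      nsmul_eq_mul, hsupersets]

theorem bind_eraseOrRandomErase_uniformOfFinset_powersetCard {X : Finset α} {r : α} {j : ℕ}
    (hj : 1 ≤ j) (h : (X.powersetCard j).Nonempty)
    (h' : ((X.erase r).powersetCard (j - 1)).Nonempty) :
    (PMF.uniformOfFinset (X.powersetCard j) h).bind (eraseOrRandomErase r) =
      PMF.uniformOfFinset ((X.erase r).powersetCard (j - 1)) h' := by
  -- The mass at `T` depends only on `|T|`; together with the support bound this forces uniformity.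
  have hvalue : ∀ T ∈ (X.erase r).powersetCard (j - 1),
      (PMF.uniformOfFinset (X.powersetCard j) h).bind (eraseOrRandomErase r) T =
        ((X.powersetCard j).card : ℝ≥0∞)⁻¹ *
          ((if r ∈ X then 1 else 0) + ((X.erase r).card - (j - 1) : ℕ) * (j : ℝ≥0∞)⁻¹) := by
    intro T hT
    rw [PMF.bind_apply, tsum_eq_sum (s := X.powersetCard j) fun S hS => by
      rw [PMF.uniformOfFinset_apply_of_notMem h hS, zero_mul], ← sum_eraseOrRandomErase_apply hj hT,
      mul_sum]
    exact sum_congr rfl fun S hS => by rw [PMF.uniformOfFinset_apply_of_mem h hS]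
  refine PMF.eq_uniformOfFinset_of_support_subset h' ?_ fun T hT T' hT' => by
    rw [hvalue T hT, hvalue T' hT']
  intro T hT
  obtain ⟨S, hS, hTS⟩ := (PMF.mem_support_bind_iff _ _ _).1 hT
  rw [PMF.mem_support_uniformOfFinset_iff, mem_powersetCard] at hS
  rw [mem_coe, mem_powersetCard]
  unfold eraseOrRandomErase at hTS
  split_ifs at hTS with hrS hne
  · rw [PMF.mem_support_pure_iff] at hTS
    subst hTS
    exact ⟨erase_subset_erase r hS.1, by rw [card_erase_of_mem hrS, hS.2]⟩
  · obtain ⟨u, hu, rfl⟩ := (PMF.mem_support_map_iff _ _ _).1 hTS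
    rw [PMF.mem_support_uniformOfFinset_iff] at hu
    exact ⟨subset_erase.2 ⟨(erase_subset u S).trans hS.1, fun h => hrS (mem_of_mem_erase h)⟩,
      by rw [card_erase_of_mem hu, hS.2]⟩
  · exact absurd (card_pos.1 (by omega)) hne

lemma eraseOrRandomErase_eq_uniformOfFinset {S : Finset α}
    (hS : S.Nonempty) (r : α) (h : ((S.erase r).powersetCard (S.card - 1)).Nonempty) :
    eraseOrRandomErase r S = PMF.uniformOfFinset ((S.erase r).powersetCard (S.card - 1)) h := by
  have := bind_eraseOrRandomErase_uniformOfFinset_powersetCard (r := r) (card_pos.2 hS)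
    (powersetCard_nonempty.2 le_rfl) h
  rwa [PMF.uniformOfFinset_eq_pure (powersetCard_self S), PMF.pure_bind] at this

end RandomErase

section Paging

variable {n : ℕ}

noncomputable def confDistFrom (K : Kernel n) :
    List (Fin n) → List (Fin n) → Finset (Fin n) → PMF (Finset (Fin n))
  | [], _, C => PMF.pure C
  | r :: rest, hist, C => (K hist C r).bind fun C' => confDistFrom K rest (hist ++ [r]) C'

theorem map_runFrom_getD (K : Kernel n) (σ hist : List (Fin n)) (C d : Finset (Fin n)) {t : ℕ}
    (ht : t ≤ σ.length) :
    (runFrom K σ hist C).map (fun Cs => (C :: Cs).getD t d) = confDistFrom K (σ.take t) hist C := by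
  induction σ generalizing t hist C with
  | nil =>
    obtain rfl : t = 0 := Nat.le_zero.1 ht
    exact PMF.pure_map _ _
  | cons r rest ih =>
    cases t with
    | zero => exact PMF.map_const _ _
    | succ t =>
      simp only [runFrom, PMF.map_bind, PMF.map_comp, List.take_succ_cons, confDistFrom]
      exact congrArg _ (funext fun C' => ih (hist ++ [r]) C' (Nat.le_of_succ_le_succ ht))

theorem map_run_confAt (k : ℕ) (K : Kernel n) (σ : List (Fin n)) {t : ℕ} (ht : t ≤ σ.length) :
    (run k K σ).map (confAt k · t) = confDistFrom K (σ.take t) [] (initConf k n) :=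
  map_runFrom_getD K σ [] _ _ ht

theorem confDistFrom_append_singleton (K : Kernel n) (π hist : List (Fin n)) (r : Fin n)
    (C : Finset (Fin n)) :
    confDistFrom K (π ++ [r]) hist C =
      (confDistFrom K π hist C).bind fun D => K (hist ++ π) D r := by
  induction π generalizing hist C with
  | nil => simp [confDistFrom]
  | cons a π ih => simp [confDistFrom, ih, PMF.bind_bind]

lemma phaseState_append_singleton (k : ℕ) (π : List (Fin n)) (r : Fin n) :
    phaseState k (π ++ [r]) = phaseStep k (phaseState k π) r := by
  simp [phaseState]

lemma marksAfter_append_singleton (k : ℕ) (π : List (Fin n)) (r : Fin n) :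
    marksAfter k (π ++ [r]) = markUpdate k (marksAfter k π) r := by
  simp [marksAfter]

lemma card_initConf (k n : ℕ) : (initConf k n).card = min n k :=
  Fin.card_filter_val_lt

lemma card_prev_phaseState {k : ℕ} (hkn : k ≤ n) (π : List (Fin n)) :
    (phaseState k π).prev.card = k := by
  induction π using List.reverseRecOn with
  | nil => exact (card_initConf k n).trans (min_eq_right hkn)
  | append_singleton π r ih =>
    rw [phaseState_append_singleton, phaseStep]
    split_ifs with hr hfull
    exacts [ih, hfull, ih]

lemma card_cur_phaseState_le {k : ℕ} (hk : 1 ≤ k) (π : List (Fin n)) :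
    (phaseState k π).cur.card ≤ k := by
  induction π using List.reverseRecOn with
  | nil => exact (card_initConf k n).trans_le (min_le_right n k)
  | append_singleton π r ih =>
    rw [phaseState_append_singleton, phaseStep]
    split_ifs with hr hfull
    · exact ih
    · exact (card_singleton r).trans_le hk
    · exact (card_insert_le r _).trans (by omega)

lemma marksAfter_eq_cur {k : ℕ} (hk : 1 ≤ k) (π : List (Fin n)) :
    marksAfter k π = (phaseState k π).cur := by
  induction π using List.reverseRecOn with
  | nil => rfl
  | append_singleton π r ih =>
    have hcur := card_cur_phaseState_le hk π
    rw [marksAfter_append_singleton, phaseState_append_singleton, ih, markUpdate, phaseStep]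
    by_cases hr : r ∈ (phaseState k π).cur
    · rw [insert_eq_of_mem hr, if_neg (by omega), if_pos hr]
    · rw [card_insert_of_notMem hr, if_neg hr]
      by_cases hfull : (phaseState k π).cur.card = k
      · rw [if_pos (by omega), if_pos hfull]
      · rw [if_neg (by omega), if_neg hfull]

end Paging

section Marking

variable {n : ℕ}

abbrev PhaseSt.stale (p : PhaseSt n) : Finset (Fin n) := p.prev \ p.cur

noncomputable def PhaseSt.confDist (k : ℕ) (p : PhaseSt n)
    (h : (p.stale.powersetCard (k - p.cur.card)).Nonempty) : PMF (Finset (Fin n)) :=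
  (PMF.uniformOfFinset _ h).map (p.cur ∪ ·)

lemma powersetCard_stale_nonempty {k : ℕ} (hkn : k ≤ n) (π : List (Fin n)) :
    ((phaseState k π).stale.powersetCard (k - (phaseState k π).cur.card)).Nonempty :=
  powersetCard_nonempty.2 <| by
    simpa only [card_prev_phaseState hkn π] using
      le_card_sdiff (phaseState k π).cur (phaseState k π).prev

lemma PhaseSt.confDist_of_card_cur_eq {k : ℕ} {p : PhaseSt n} (hcard : p.cur.card = k) (h) :
    p.confDist k h = PMF.pure p.cur := by
  rw [confDist, PMF.uniformOfFinset_eq_pure (by rw [hcard, Nat.sub_self, powersetCard_zero]),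
    PMF.pure_map, union_empty]

lemma markingKernel_of_mem {k : ℕ} {π : List (Fin n)} {C : Finset (Fin n)} {r : Fin n}
    (hr : r ∈ C) : markingKernel k n π C r = PMF.pure C :=
  if_pos hr

lemma markingKernel_union {k : ℕ} {π : List (Fin n)} {B S : Finset (Fin n)} {r : Fin n}
    (hM : marksAfter k (π ++ [r]) = insert r B) (hrB : r ∉ B) (hBS : Disjoint B S)
    (hS : S.Nonempty) :
    markingKernel k n π (B ∪ S) r = (eraseOrRandomErase r S).map (insert r B ∪ ·) := by
  by_cases hrS : r ∈ S
  · rw [markingKernel_of_mem (mem_union_right B hrS), eraseOrRandomErase, if_pos hrS,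
      PMF.pure_map, insert_union, ← union_insert, insert_erase hrS]
  · have hdiff : (B ∪ S) \ insert r B = S := by
      rw [union_sdiff_distrib, sdiff_eq_empty_iff_subset.2 (subset_insert r B), empty_union,
        sdiff_insert, hBS.symm.sdiff_eq_left, erase_eq_of_notMem hrS]
    simp only [markingKernel, hM, mem_union, hrB, hrS, or_self, if_false, hdiff, dif_pos hS]
    rw [eraseOrRandomErase, if_neg hrS, dif_pos hS, PMF.map_comp]
    refine PMF.map_congr_of_mem_support fun u hu => ?_
    rw [PMF.mem_support_uniformOfFinset_iff] at hu
    rw [Function.comp_apply, erase_union_distrib, erase_eq_of_notMem (disjoint_right.1 hBS hu),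
      insert_union]

lemma PhaseSt.confDist_bind_markingKernel_of_mem {k : ℕ} {π : List (Fin n)} {r : Fin n}
    {p : PhaseSt n} (hr : r ∈ p.cur) (h h') :
    (p.confDist k h).bind (fun C => markingKernel k n π C r) = (phaseStep k p r).confDist k h' := by
  have hstep : phaseStep k p r = p := if_pos hr
  simp only [hstep]
  rw [confDist, PMF.bind_map]
  exact (PMF.bind_congr_of_mem_support fun S _ => markingKernel_of_mem (mem_union_left S hr)).trans
    (PMF.bind_pure_comp _ _)

lemma PhaseSt.confDist_bind_markingKernel_of_card_eq {k : ℕ} (hk : 1 ≤ k) {π : List (Fin n)}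
    {r : Fin n} {p : PhaseSt n} (hr : r ∉ p.cur) (hfull : p.cur.card = k)
    (hM : marksAfter k π = p.cur) (h h') :
    (p.confDist k h).bind (fun C => markingKernel k n π C r) = (phaseStep k p r).confDist k h' := by
  have hstep : phaseStep k p r = ⟨p.cur, {r}⟩ := by rw [phaseStep, if_neg hr, if_pos hfull]
  have hM' : marksAfter k (π ++ [r]) = insert r ∅ := by
    rw [marksAfter_append_singleton, hM, markUpdate,
      if_pos (by rw [card_insert_of_notMem hr, hfull])]
    rfl
  have hcur : p.cur.Nonempty := card_pos.1 (by omega)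
  rw [confDist_of_card_cur_eq hfull, PMF.pure_bind, ← empty_union p.cur,
    markingKernel_union hM' (notMem_empty r) (disjoint_empty_left _) hcur,
    eraseOrRandomErase_eq_uniformOfFinset hcur r
      (powersetCard_nonempty.2 (by rw [erase_eq_of_notMem hr]; omega))]
  simp only [hstep, confDist, stale, sdiff_singleton_eq_erase, card_singleton, hfull,
    insert_empty]

lemma PhaseSt.confDist_bind_markingKernel_of_card_lt {k : ℕ} {π : List (Fin n)} {r : Fin n}
    {p : PhaseSt n} (hr : r ∉ p.cur) (hlt : p.cur.card < k) (hM : marksAfter k π = p.cur)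
    (h h') :
    (p.confDist k h).bind (fun C => markingKernel k n π C r) = (phaseStep k p r).confDist k h' := by
  have hstep : phaseStep k p r = ⟨p.prev, insert r p.cur⟩ := by
    rw [phaseStep, if_neg hr, if_neg hlt.ne]
  have hM' : marksAfter k (π ++ [r]) = insert r p.cur := by
    rw [marksAfter_append_singleton, hM, markUpdate,
      if_neg (by rw [card_insert_of_notMem hr]; omega)]
  have hkernel : ∀ S ∈ (PMF.uniformOfFinset _ h).support,
      markingKernel k n π (p.cur ∪ S) r = (eraseOrRandomErase r S).map (insert r p.cur ∪ ·) := by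
    intro S hS
    rw [PMF.mem_support_uniformOfFinset_iff, mem_powersetCard] at hS
    exact markingKernel_union hM' hr (disjoint_sdiff.mono_right hS.1) (card_pos.1 (by omega))
  rw [confDist, PMF.bind_map]
  simp only [Function.comp_def]
  rw [PMF.bind_congr_of_mem_support hkernel, ← PMF.map_bind,
    bind_eraseOrRandomErase_uniformOfFinset_powersetCard (by omega) h
      (powersetCard_nonempty.2 ((Nat.sub_le_sub_right (powersetCard_nonempty.1 h) 1).trans
        (pred_card_le_card_erase)))]
  simp only [hstep, confDist, stale, sdiff_insert, card_insert_of_notMem hr, Nat.sub_add_eq]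

lemma PhaseSt.confDist_bind_markingKernel {k : ℕ} (hk : 1 ≤ k) {π : List (Fin n)} {r : Fin n}
    {p : PhaseSt n} (hcur : p.cur.card ≤ k) (hM : marksAfter k π = p.cur) (h h') :
    (p.confDist k h).bind (fun C => markingKernel k n π C r) = (phaseStep k p r).confDist k h' := by
  by_cases hr : r ∈ p.cur
  · exact confDist_bind_markingKernel_of_mem hr h h'
  · rcases hcur.eq_or_lt with hfull | hlt
    · exact confDist_bind_markingKernel_of_card_eq hk hr hfull hM h h'
    · exact confDist_bind_markingKernel_of_card_lt hr hlt hM h h'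

theorem confDistFrom_markingKernel {k : ℕ} (hk : 1 ≤ k) (hkn : k ≤ n) (π : List (Fin n)) :
    confDistFrom (markingKernel k n) π [] (initConf k n) =
      (phaseState k π).confDist k (powersetCard_stale_nonempty hkn π) := by
  induction π using List.reverseRecOn with
  | nil =>
    exact (PhaseSt.confDist_of_card_cur_eq (p := phaseState k [])
      ((card_initConf k n).trans (min_eq_right hkn)) _).symm
  | append_singleton π r ih =>
    rw [confDistFrom_append_singleton, ih, List.nil_append,
      PhaseSt.confDist_bind_markingKernel hk (card_cur_phaseState_le hk π) (marksAfter_eq_cur hk π)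
        _ (phaseState_append_singleton k π r ▸ powersetCard_stale_nonempty hkn (π ++ [r]))]
    congr 1
    exact (phaseState_append_singleton k π r).symm

lemma PhaseSt.card_cur_sdiff_prev {k : ℕ} {p : PhaseSt n} (hprev : p.prev.card = k)
    (hcur : p.cur.card ≤ k) : (p.cur \ p.prev).card = p.stale.card - (k - p.cur.card) := by
  have h₁ := card_sdiff_add_card p.cur p.prev
  have h₂ := card_sdiff_add_card p.prev p.cur
  rw [union_comm] at h₂
  unfold stale
  omega

lemma PhaseSt.toReal_confDist_toOuterMeasure_notMem {k : ℕ} {p : PhaseSt n} {r : Fin n}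
    (hprev : p.prev.card = k) (hcur : p.cur.card ≤ k) (hr : r ∈ p.stale) (h) :
    ((p.confDist k h).toOuterMeasure {D | r ∉ D}).toReal =
      ((p.cur \ p.prev).card : ℝ) / p.stale.card := by
  have hpre : (p.cur ∪ ·) ⁻¹' {D | r ∉ D} = {S | r ∉ S} := by
    ext S
    simp [(mem_sdiff.1 hr).2]
  rw [confDist, PMF.toOuterMeasure_map_apply, hpre,
    PMF.toReal_uniformOfFinset_powersetCard_notMem hr, card_cur_sdiff_prev hprev hcur]

end Marking

theorem marking_stale_fault_probability_general (k n : ℕ) (hkn : k < n)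
    (σ : List (Fin n)) (i : Fin σ.length)
    (hstale : σ.get i ∈ (phaseState k (σ.take (i : ℕ))).prev ∧
      σ.get i ∉ (phaseState k (σ.take (i : ℕ))).cur ∧
      (phaseState k (σ.take (i : ℕ))).cur.card < k) :
    (∑' Cs : List (Finset (Fin n)),
        if σ.get i ∈ confAt k Cs (i : ℕ) then 0
        else (run k (markingKernel k n) σ) Cs).toReal
      = (((phaseState k (σ.take (i : ℕ))).cur \ (phaseState k (σ.take (i : ℕ))).prev).card : ℝ)
        / (((phaseState k (σ.take (i : ℕ))).prev \ (phaseState k (σ.take (i : ℕ))).cur).card : ℝ) := by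
  obtain ⟨hr_prev, hr_cur, hcur_lt⟩ := hstale
  have hk : 1 ≤ k := Nat.one_le_of_lt hcur_lt
  have hmiss : (∑' Cs, if σ.get i ∈ confAt k Cs i then 0 else run k (markingKernel k n) σ Cs) =
      ((run k (markingKernel k n) σ).map (confAt k · i)).toOuterMeasure {D | σ.get i ∉ D} := by
    rw [PMF.toOuterMeasure_map_apply, PMF.toOuterMeasure_apply]
    refine tsum_congr fun Cs => ?_
    by_cases h : σ.get i ∈ confAt k Cs i
    · rw [if_pos h, Set.indicator_of_notMem (not_not_intro h)]
    · rw [if_neg h, Set.indicator_of_mem h]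
  rw [hmiss, map_run_confAt k _ σ i.is_lt.le, confDistFrom_markingKernel hk hkn.le]
  exact PhaseSt.toReal_confDist_toOuterMeasure_notMem (card_prev_phaseState hkn.le _)
    (card_cur_phaseState_le hk _) (mem_sdiff.2 ⟨hr_prev, hr_cur⟩) _

/-- If the request at time `i` is stale, the probability that the marking
algorithm's configuration just before serving it does not cover it is `c/s`,
where `c` is the number of clean vertices requested so far in the phase and `s`
is the current number of stale vertices (including the requested one). -/
theorem marking_stale_fault_probability (k n : ℕ) (hk : 1 ≤ k) (hkn : k < n)
    (σ : List (Fin n)) (i : Fin σ.length)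
    (hstale : σ.get i ∈ (phaseState k (σ.take (i : ℕ))).prev ∧
      σ.get i ∉ (phaseState k (σ.take (i : ℕ))).cur ∧
      (phaseState k (σ.take (i : ℕ))).cur.card < k) :
    (∑' Cs : List (Finset (Fin n)),
        if σ.get i ∈ confAt k Cs (i : ℕ) then 0
        else (run k (markingKernel k n) σ) Cs).toReal
      = (((phaseState k (σ.take (i : ℕ))).cur \ (phaseState k (σ.take (i : ℕ))).prev).card : ℝ)
        / (((phaseState k (σ.take (i : ℕ))).prev \ (phaseState k (σ.take (i : ℕ))).cur).card : ℝ) :=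
  marking_stale_fault_probability_general k n hkn σ i hstale
end

section
/- For every n ≥ 3, algorithm EATR of type (2,n) is 3/2-competitive: there exists a constant a such that for every request sequence σ, the expected cost of EATR satisfies E[C_EATR(σ)] ≤ (3/2)·OPT(σ) + a. -/
/-!
Paging model with `k = 2`: vertices are `Fin n` (`n ≥ 3`), configurations are
2-element subsets of `Fin n`.  `OPT` is the optimal offline cost and `expCost`
the expected cost of a randomized online algorithm (given by its transition
kernel), starting from the configuration `{0,1}`.

Algorithm EATR: the request sequence is partitioned into phases; within a phase,
EATR keeps one server on the most recently requested vertex and the other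
uniformly at random among the stale vertices (the vertices, among those occupied
at the end of the previous phase or requested during the current phase, that are
neither clean nor the most recently requested vertex); when a stale vertex is
requested, the servers are placed on the two most recently requested vertices
and the phase ends.

The bookkeeping fold `eatrState` maintains the pair `(act, mru)` where `act` is
the set of vertices occupied at the end of the previous phase or requested
during the current phase, and `mru` is the most recently requested vertex, so
that the stale set is `act \ {mru}`.  The kernel `eatrKernel` implements the
resulting server movements: a request to a covered vertex moves nothing; a
request to an uncovered stale vertex moves the non-`mru` server there (ending the
phase); a request to a clean vertex `r` moves, with probability `1/|act|`, the
non-`mru` server to `r` (keeping a server on `mru`), and otherwise moves the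
`mru` server to `r` — this keeps the random server uniform on the new stale set.

STATEMENT: For every `n ≥ 3`, algorithm EATR of type `(2,n)` is
`3/2`-competitive: there exists a constant `a` such that for every request
sequence `σ`, `E[C_EATR(σ)] ≤ (3/2)·OPT(σ) + a`.
-/

open scoped ENNReal

/-- One step of EATR's phase bookkeeping on the pair `(act, mru)`. -/
def eatrStep {n : ℕ} (s : Finset (Fin n) × Fin n) (r : Fin n) : Finset (Fin n) × Fin n :=
  if r = s.2 then s
  else if r ∈ s.1 then ({s.2, r}, r)
  else (insert r s.1, r)

/-- EATR's phase bookkeeping state after processing the request sequence `σ`: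
initially the active set is `{0,1}` and the most recently requested vertex is
taken to be the vertex `1`. -/
def eatrState (n : ℕ) (hn : 3 ≤ n) (σ : List (Fin n)) : Finset (Fin n) × Fin n :=
  σ.foldl eatrStep (initConf 2 n, ⟨1, by omega⟩)

/-- Algorithm EATR of type `(2,n)`. -/
noncomputable def eatrKernel (n : ℕ) (hn : 3 ≤ n) : Kernel n := fun hist C r =>
  let s := eatrState n hn hist
  if r ∈ C then PMF.pure C
  else if r ∈ s.1 then PMF.pure (insert r {s.2})
  else if h : s.1.Nonempty then
    (PMF.uniformOfFinset s.1 h).map fun z =>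
      if z = s.2 then insert r {s.2} else insert r (C.erase s.2)
  else PMF.pure (insert r {s.2})

/-!
Call a request *clean* if it is to a vertex outside EATR's active set.

Offline, for every active `z` the number of clean requests still to come is at most the remaining
offline cost plus the distance `#(D \ {mru, z})` from the offline configuration `D` to `{mru, z}`:
after each request a new active `z` can be chosen so that the potential drops by one at a clean
request and rises by at most the offline move. Initially the distance is `0`, so `#clean ≤ OPT`.

Online, if the random server is uniform on `T` stale vertices, the expected remaining cost is at
most `3/2 · #clean + 1 - 1/T`: a stale request costs `1 - 1/T` in expectation and resets `T` to
`1`, while a clean request costs `1`, keeps the random server uniform and raises `T` to `T + 1`,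
and `1/T - 1/(T+1) ≤ 1/2`. Initially `T = 1`, so the expected cost is at most `3/2 · #clean`.
-/

open Finset

namespace PMF

variable {α β : Type*}

lemma tsum_pure_mul (a : α) (g : α → ℝ≥0∞) : ∑' b, pure a b * g b = g a := by
  rw [tsum_eq_single a fun b hb => by rw [pure_apply_of_ne _ _ hb, zero_mul], pure_apply_self,
    one_mul]

lemma tsum_bind_mul (p : PMF α) (f : α → PMF β) (g : β → ℝ≥0∞) :
    ∑' b, p.bind f b * g b = ∑' a, p a * ∑' b, f a b * g b := by
  simp_rw [bind_apply, ← ENNReal.tsum_mul_right, ← ENNReal.tsum_mul_left, mul_assoc]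
  exact ENNReal.tsum_comm

lemma tsum_map_mul (p : PMF α) (f : α → β) (g : β → ℝ≥0∞) :
    ∑' b, p.map f b * g b = ∑' a, p a * g (f a) := by
  simp only [map, tsum_bind_mul, Function.comp_apply, tsum_pure_mul]

lemma tsum_uniformOfFinset_mul (s : Finset α) (h : s.Nonempty) (g : α → ℝ≥0∞) :
    ∑' a, uniformOfFinset s h a * g a = (#s : ℝ≥0∞)⁻¹ * ∑ a ∈ s, g a := by
  rw [tsum_eq_sum (s := s) fun a ha => by rw [uniformOfFinset_apply_of_notMem h ha, zero_mul],
    mul_sum]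
  exact sum_congr rfl fun a ha => by rw [uniformOfFinset_apply_of_mem h ha]

end PMF

section ExpectedCost

variable {n : ℕ}

noncomputable def expCostFrom (K : Kernel n) (σ hist : List (Fin n)) (C : Finset (Fin n)) :
    ℝ≥0∞ :=
  ∑' Cs, runFrom K σ hist C Cs * listCost C Cs

lemma expCostFrom_nil (K : Kernel n) (hist : List (Fin n)) (C : Finset (Fin n)) :
    expCostFrom K [] hist C = 0 := by
  simp [expCostFrom, runFrom, listCost]

lemma expCostFrom_cons (K : Kernel n) (r : Fin n) (σ hist : List (Fin n)) (C : Finset (Fin n)) :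
    expCostFrom K (r :: σ) hist C =
      ∑' C', K hist C r C' * (#(C' \ C) + expCostFrom K σ (hist ++ [r]) C') := by
  rw [expCostFrom, runFrom, PMF.tsum_bind_mul]
  refine tsum_congr fun C' => congrArg _ ?_
  simp only [PMF.tsum_map_mul, listCost, Nat.cast_add, mul_add, ENNReal.tsum_add,
    ENNReal.tsum_mul_right, PMF.tsum_coe, one_mul, expCostFrom]

lemma expCostFrom_cons_of_eq_pure {K : Kernel n} {r : Fin n} {hist : List (Fin n)}
    {C C' : Finset (Fin n)} (hK : K hist C r = PMF.pure C') (σ : List (Fin n)) :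
    expCostFrom K (r :: σ) hist C = #(C' \ C) + expCostFrom K σ (hist ++ [r]) C' := by
  rw [expCostFrom_cons, hK, PMF.tsum_pure_mul]

lemma expCost_eq_toReal_expCostFrom (k : ℕ) (K : Kernel n) (σ : List (Fin n)) :
    expCost k K σ = (expCostFrom K σ [] (initConf k n)).toReal := by
  rw [expCostFrom, ENNReal.tsum_toReal_eq fun Cs => ENNReal.mul_ne_top (PMF.apply_ne_top _ _)
    (ENNReal.natCast_ne_top _)]
  simp only [ENNReal.toReal_mul, ENNReal.toReal_natCast]
  rfl

end ExpectedCost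

section Bookkeeping

variable {n : ℕ}

def cleanCount : Finset (Fin n) × Fin n → List (Fin n) → ℕ
  | _, [] => 0
  | s, r :: σ => (if r ∈ s.1 then 0 else 1) + cleanCount (eatrStep s r) σ

lemma eatrStep_self (act : Finset (Fin n)) (p : Fin n) : eatrStep (act, p) p = (act, p) := by
  simp [eatrStep]

lemma eatrStep_of_mem {act : Finset (Fin n)} {p r : Fin n} (hrp : r ≠ p) (hr : r ∈ act) :
    eatrStep (act, p) r = ({p, r}, r) := by
  simp [eatrStep, hrp, hr]

lemma eatrStep_of_notMem {act : Finset (Fin n)} {p r : Fin n} (hp : p ∈ act) (hr : r ∉ act) :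
    eatrStep (act, p) r = (insert r act, r) := by
  simp [eatrStep, hr, ne_of_mem_of_not_mem hp hr |>.symm]

lemma eatrState_append (hn : 3 ≤ n) (hist : List (Fin n)) (r : Fin n) :
    eatrState n hn (hist ++ [r]) = eatrStep (eatrState n hn hist) r := by
  simp [eatrState, List.foldl_append]

lemma eatrStep_snd_mem_fst {s : Finset (Fin n) × Fin n} (hs : s.2 ∈ s.1) (r : Fin n) :
    (eatrStep s r).2 ∈ (eatrStep s r).1 := by
  unfold eatrStep
  split_ifs <;> simp [*]

lemma initConf_two_eq (hn : 2 ≤ n) : initConf 2 n = {⟨1, by omega⟩, ⟨0, by omega⟩} := by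
  ext v
  simp only [initConf, mem_filter, mem_univ, true_and, mem_insert, mem_singleton, Fin.ext_iff]
  omega

end Bookkeeping

section OfflineLowerBound

variable {n : ℕ}

lemma card_pair_sdiff {α : Type*} [DecidableEq α] {a b : α} (hab : a ≠ b) (X : Finset α) :
    #({a, b} \ X) = (if a ∈ X then 0 else 1) + (if b ∈ X then 0 else 1) := by
  rw [sdiff_eq_filter, filter_insert, filter_singleton]
  split_ifs <;> simp_all

lemma exists_mem_eatrStep_card_sdiff_le {act D : Finset (Fin n)} {p z r : Fin n}
    (hp : p ∈ act) (hz : z ∈ act) (hD : #D = 2) (hr : r ∈ D) :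
    ∃ z' ∈ (eatrStep (act, p) r).1,
      (if r ∈ act then 0 else 1) + #(D \ {(eatrStep (act, p) r).2, z'}) ≤ #(D \ {p, z}) := by
  obtain ⟨d, hdr, rfl⟩ : ∃ d, r ≠ d ∧ D = {r, d} := by
    obtain ⟨a, b, hab, rfl⟩ := card_eq_two.mp hD
    rcases mem_insert.mp hr with rfl | hb
    · exact ⟨b, hab, rfl⟩
    · obtain rfl := mem_singleton.mp hb
      exact ⟨a, hab.symm, pair_comm a r⟩
  by_cases hrp : r = p
  · subst hrp
    exact ⟨z, by simpa [eatrStep_self, hp]⟩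
  by_cases hra : r ∈ act
  · refine ⟨p, by simp [eatrStep_of_mem hrp hra], ?_⟩
    simp only [eatrStep_of_mem hrp hra, card_pair_sdiff hdr, hra, if_true]
    split_ifs <;> simp_all
  · refine if hda : d ∈ act then ⟨d, ?_⟩ else ⟨p, ?_⟩ <;>
      simp only [eatrStep_of_notMem hp hra, mem_insert, card_pair_sdiff hdr, hra, if_false] <;>
      split_ifs <;> simp_all

lemma cleanCount_le_listCost_add {σ : List (Fin n)} {Cs : List (Finset (Fin n))}
    (hσ : List.Forall₂ (· ∈ ·) σ Cs) (hCs : ∀ C ∈ Cs, #C = 2) {act D : Finset (Fin n)}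
    {p z : Fin n} (hp : p ∈ act) (hz : z ∈ act) :
    cleanCount (act, p) σ ≤ listCost D Cs + #(D \ {p, z}) := by
  induction hσ generalizing act p z D with
  | nil => exact Nat.zero_le _
  | @cons r D' σ Cs hr _ ih =>
    obtain ⟨z', hz', hstep⟩ :=
      exists_mem_eatrStep_card_sdiff_le hp hz (hCs D' List.mem_cons_self) hr
    have hp' := eatrStep_snd_mem_fst (s := (act, p)) hp r
    simp only [cleanCount, listCost]
    generalize eatrStep (act, p) r = s' at hz' hp' hstep ⊢
    obtain ⟨act', p'⟩ := s'
    dsimp only at hz' hp' hstep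
    have ih' := ih (fun C hC => hCs C (List.mem_cons_of_mem _ hC)) hp' hz' (D := D')
    have htriangle : #(D' \ {p, z}) ≤ #(D' \ D) + #(D \ {p, z}) :=
      (card_le_card (sdiff_triangle D' D {p, z})).trans (card_union_le _ _)
    omega

lemma exists_serves (hn : 2 ≤ n) (σ : List (Fin n)) : ∃ Cs, Serves 2 σ Cs := by
  choose C hrC hC using fun r : Fin n =>
    exists_subsuperset_card_eq (n := 2) (subset_univ {r}) (by simp) (by simpa using hn)
  refine ⟨σ.map C, ?_, by simp [hC]⟩
  rw [List.forall₂_map_right_iff]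
  exact List.forall₂_same.mpr fun r _ => singleton_subset_iff.mp (hrC r)

lemma cleanCount_le_OPT (hn : 3 ≤ n) (σ : List (Fin n)) :
    cleanCount (eatrState n hn []) σ ≤ OPT 2 n σ := by
  obtain ⟨Cs, hCs⟩ := exists_serves (by omega) σ
  refine le_csInf ⟨_, Cs, hCs, rfl⟩ ?_
  rintro _ ⟨Cs, ⟨hσ, hCs⟩, rfl⟩
  have hinit := initConf_two_eq (n := n) (by omega)
  change cleanCount (initConf 2 n, ⟨1, by omega⟩) σ ≤ _
  simpa [hinit] using cleanCount_le_listCost_add hσ hCs (D := initConf 2 n)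
    (p := ⟨1, by omega⟩) (z := ⟨0, by omega⟩) (by simp) (by simp)

end OfflineLowerBound

lemma two_mul_add_two_le_of_succ_mul_eq {t : ℕ} (ht : 1 ≤ t) {x y c : ℝ≥0∞}
    (hxy : (t + 1) * x = t * (t + 1 + y)) (hy : 2 * y + 2 ≤ (t + 1) * (3 * c + 2)) :
    2 * x + 2 ≤ t * (3 * (1 + c) + 2) := by
  rw [← ENNReal.mul_le_mul_iff_right (by simp : (t + 1 : ℝ≥0∞) ≠ 0) (by simp)]
  have htt : (2 : ℝ≥0∞) ≤ t * (t + 1) := by exact_mod_cast (by nlinarith : 2 ≤ t * (t + 1))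
  calc (t + 1) * (2 * x + 2) = t * (2 * y + 2) + 2 * t * (t + 1) + 2 := by
        rw [mul_add, ← mul_assoc, mul_comm _ (2 : ℝ≥0∞), mul_assoc, hxy]; ring
    _ ≤ t * ((t + 1) * (3 * c + 2)) + 2 * t * (t + 1) + t * (t + 1) := by gcongr
    _ = (t + 1) * (t * (3 * (1 + c) + 2)) := by ring

section OnlineUpperBound

variable {n : ℕ} (hn : 3 ≤ n)

lemma eatrKernel_of_mem {hist : List (Fin n)} {C : Finset (Fin n)} {r : Fin n} (hr : r ∈ C) :
    eatrKernel n hn hist C r = PMF.pure C := by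
  simp [eatrKernel, hr]

lemma eatrKernel_of_stale {hist : List (Fin n)} {act C : Finset (Fin n)} {p r : Fin n}
    (hs : eatrState n hn hist = (act, p)) (hrC : r ∉ C) (hr : r ∈ act) :
    eatrKernel n hn hist C r = PMF.pure {r, p} := by
  simp [eatrKernel, hs, hrC, hr]

lemma eatrKernel_of_clean {hist : List (Fin n)} {act : Finset (Fin n)} {p r z : Fin n}
    (hs : eatrState n hn hist = (act, p)) (hp : p ∈ act) (hr : r ∉ act) (hz : z ∈ act.erase p) :
    eatrKernel n hn hist {p, z} r =
      (PMF.uniformOfFinset act (show act.Nonempty from ⟨p, hp⟩)).map fun a =>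
        if a = p then {r, p} else {r, z} := by
  obtain ⟨hzp, hza⟩ := mem_erase.mp hz
  have hrC : r ∉ ({p, z} : Finset (Fin n)) := by
    simp [ne_of_mem_of_not_mem hp hr |>.symm, ne_of_mem_of_not_mem hza hr |>.symm]
  simp [eatrKernel, hs, hrC, hr, show act.Nonempty from ⟨p, hp⟩, hzp.symm]

noncomputable def eatrCostSum (σ hist : List (Fin n)) (act : Finset (Fin n)) (p : Fin n) :
    ℝ≥0∞ :=
  ∑ z ∈ act.erase p, expCostFrom (eatrKernel n hn) σ hist {p, z}

lemma eatrCostSum_nil (hist : List (Fin n)) (act : Finset (Fin n)) (p : Fin n) :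
    eatrCostSum hn [] hist act p = 0 := by
  simp [eatrCostSum, expCostFrom_nil]

lemma eatrCostSum_cons_self (σ hist : List (Fin n)) (act : Finset (Fin n)) (p : Fin n) :
    eatrCostSum hn (p :: σ) hist act p = eatrCostSum hn σ (hist ++ [p]) act p := by
  refine sum_congr rfl fun z _ => ?_
  rw [expCostFrom_cons_of_eq_pure (eatrKernel_of_mem hn (mem_insert_self p {z}))]
  simp

lemma eatrCostSum_cons_of_stale {hist : List (Fin n)} {act : Finset (Fin n)} {p r : Fin n}
    (hs : eatrState n hn hist = (act, p)) (hr : r ∈ act.erase p) (σ : List (Fin n)) :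
    eatrCostSum hn (r :: σ) hist act p =
      expCostFrom (eatrKernel n hn) σ (hist ++ [r]) {r, p} +
        #((act.erase p).erase r) * (1 + expCostFrom (eatrKernel n hn) σ (hist ++ [r]) {r, p}) := by
  obtain ⟨hrp, hra⟩ := mem_erase.mp hr
  rw [eatrCostSum, ← add_sum_erase _ _ hr, ← nsmul_eq_mul, ← sum_const]
  congr 1
  · rw [expCostFrom_cons_of_eq_pure (eatrKernel_of_mem hn (by simp)), pair_comm]
    simp
  · refine sum_congr rfl fun z hz => ?_
    have hrz : r ≠ z := (ne_of_mem_erase hz).symm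
    rw [expCostFrom_cons_of_eq_pure (eatrKernel_of_stale hn hs (by simp [hrp, hrz]) hra),
      card_pair_sdiff hrp]
    simp [hrp, hrz]

lemma card_mul_expCostFrom_cons_of_clean {hist : List (Fin n)} {act : Finset (Fin n)}
    {p r z : Fin n} (hs : eatrState n hn hist = (act, p)) (hp : p ∈ act) (hr : r ∉ act)
    (hz : z ∈ act.erase p) (σ : List (Fin n)) :
    #act * expCostFrom (eatrKernel n hn) (r :: σ) hist {p, z} =
      1 + expCostFrom (eatrKernel n hn) σ (hist ++ [r]) {r, p} +
        #(act.erase p) * (1 + expCostFrom (eatrKernel n hn) σ (hist ++ [r]) {r, z}) := by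
  have hrp : r ≠ p := ne_of_mem_of_not_mem hp hr |>.symm
  have hrz : r ≠ z := ne_of_mem_of_not_mem (mem_of_mem_erase hz) hr |>.symm
  have hzp : z ≠ p := ne_of_mem_erase hz
  rw [expCostFrom_cons, eatrKernel_of_clean hn hs hp hr hz, PMF.tsum_map_mul]
  simp only [PMF.tsum_uniformOfFinset_mul]
  rw [← mul_assoc,
    ENNReal.mul_inv_cancel (by simpa using ne_empty_of_mem hp) (ENNReal.natCast_ne_top _), one_mul,
    ← add_sum_erase _ _ hp, if_pos rfl, card_pair_sdiff hrp, ← nsmul_eq_mul, ← sum_const]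
  refine congrArg₂ _ (by simp [hrp, hrz]) (sum_congr rfl fun a ha => ?_)
  rw [if_neg (ne_of_mem_erase ha), card_pair_sdiff hrz]
  simp [hrp, hrz, hzp]

lemma card_mul_eatrCostSum_cons_of_clean {hist : List (Fin n)} {act : Finset (Fin n)}
    {p r : Fin n} (hs : eatrState n hn hist = (act, p)) (hp : p ∈ act) (hr : r ∉ act)
    (σ : List (Fin n)) :
    #act * eatrCostSum hn (r :: σ) hist act p =
      #(act.erase p) * (#act + eatrCostSum hn σ (hist ++ [r]) (insert r act) r) := by
  rw [eatrCostSum, mul_sum, sum_congr rfl fun z hz =>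
      card_mul_expCostFrom_cons_of_clean hn hs hp hr hz σ, eatrCostSum, erase_insert hr,
    ← add_sum_erase _ _ hp, ← card_erase_add_one hp, sum_add_distrib, sum_const, nsmul_eq_mul,
    ← mul_sum, sum_add_distrib, sum_const, nsmul_eq_mul]
  push_cast
  ring

/-- With EATR's second server uniform on the `T` stale vertices `act.erase p`, the expected cost is
at most `3/2` per clean request plus `1 - 1/T`. -/
theorem two_mul_eatrCostSum_add_two_le (σ : List (Fin n)) :
    ∀ {hist : List (Fin n)} {act : Finset (Fin n)} {p : Fin n},
      eatrState n hn hist = (act, p) → p ∈ act → (act.erase p).Nonempty →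
        2 * eatrCostSum hn σ hist act p + 2 ≤
          #(act.erase p) * (3 * cleanCount (act, p) σ + 2) := by
  induction σ with
  | nil =>
    intro hist act p _ _ hS
    have : (1 : ℝ≥0∞) ≤ #(act.erase p) := by exact_mod_cast hS.card_pos
    simpa [eatrCostSum_nil, cleanCount] using mul_le_mul_left this 2
  | cons r σ ih =>
    intro hist act p hs hp hS
    have hs' := eatrState_append hn hist r
    rw [hs] at hs'
    by_cases hrp : r = p
    · subst hrp
      rw [eatrStep_self] at hs'
      simpa [eatrCostSum_cons_self, cleanCount, hp, eatrStep_self] using ih hs' hp hS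
    by_cases hra : r ∈ act
    · rw [eatrStep_of_mem hrp hra] at hs'
      have hr : r ∈ act.erase p := mem_erase.mpr ⟨hrp, hra⟩
      have ih' := ih hs' (by simp) ⟨p, mem_erase.mpr ⟨Ne.symm hrp, by simp⟩⟩
      rw [eatrCostSum, pair_comm p r, erase_insert (by simpa using hrp), sum_singleton,
        card_singleton, Nat.cast_one, one_mul] at ih'
      rw [eatrCostSum_cons_of_stale hn hs hr, cleanCount, if_pos hra, zero_add,
        eatrStep_of_mem hrp hra, pair_comm p r, ← card_erase_add_one hr, Nat.cast_add,
        Nat.cast_one]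
      calc _ = (#((act.erase p).erase r) + 1 : ℝ≥0∞) *
            (2 * expCostFrom (eatrKernel n hn) σ (hist ++ [r]) {r, p} + 2) := by ring
        _ ≤ _ := by gcongr
    · rw [eatrStep_of_notMem hp hra] at hs'
      have ih' := ih hs' (mem_insert_self r act) (by rw [erase_insert hra]; exact ⟨p, hp⟩)
      rw [erase_insert hra, ← card_erase_add_one hp, Nat.cast_add, Nat.cast_one] at ih'
      rw [cleanCount, if_neg hra, eatrStep_of_notMem hp hra, Nat.cast_add, Nat.cast_one]
      refine two_mul_add_two_le_of_succ_mul_eq hS.card_pos ?_ ih'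
      have := card_mul_eatrCostSum_cons_of_clean hn hs hp hra σ
      rwa [← card_erase_add_one hp, Nat.cast_add, Nat.cast_one] at this

theorem two_mul_expCostFrom_eatr_le (σ : List (Fin n)) :
    2 * expCostFrom (eatrKernel n hn) σ [] (initConf 2 n) ≤
      3 * cleanCount (eatrState n hn []) σ := by
  have hinit := initConf_two_eq (n := n) (by omega)
  have herase : (initConf 2 n).erase ⟨1, by omega⟩ = {⟨0, by omega⟩} := by simp [hinit]
  have h := two_mul_eatrCostSum_add_two_le hn σ (hist := []) rfl (by simp [hinit])
    (by simp [herase])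
  rw [eatrCostSum, herase, sum_singleton, card_singleton, Nat.cast_one, one_mul, ← hinit] at h
  exact (ENNReal.add_le_add_iff_right ENNReal.ofNat_ne_top).mp h

end OnlineUpperBound

/-- Algorithm EATR of type `(2,n)` is `3/2`-competitive. -/
theorem eatr_is_three_halves_competitive (n : ℕ) (hn : 3 ≤ n) :
    ∃ a : ℝ, ∀ σ : List (Fin n),
      expCost 2 (eatrKernel n hn) σ ≤ (3 / 2 : ℝ) * (OPT 2 n σ : ℝ) + a := by
  refine ⟨0, fun σ => ?_⟩
  have honline : 2 * expCost 2 (eatrKernel n hn) σ ≤ 3 * cleanCount (eatrState n hn []) σ := by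
    rw [expCost_eq_toReal_expCostFrom]
    simpa using ENNReal.toReal_mono (by finiteness) (two_mul_expCostFrom_eatr_le hn σ)
  have hoffline : (cleanCount (eatrState n hn []) σ : ℝ) ≤ OPT 2 n σ :=
    mod_cast cleanCount_le_OPT hn σ
  linarith
end
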